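/- Let T > 0, let u : [0, T] → ℝ be continuous with u(0) > 0, let C ∈ ℝ, and let φ : (0, ∞) → ℝ be a function satisfying φ(s) → ∞ as s → 0⁺. Suppose that for every t ∈ [0, T] with u(t) > 0 one has φ(u(t)) ≤ C. Then u(t) > 0 for all t ∈ [0, T]. -/
import Mathlib

open Filter Topology

/-- Forward invariance via barrier boundedness: if `u` is continuous on `[0,T]`
with `u 0 > 0`, `φ(s) → ∞` as `s → 0⁺`, and `φ(u t) ≤ C` whenever `u t > 0` on
`[0,T]`, then `u t > 0` on all of `[0,T]`. -/
theorem stmt_6 (T : ℝ) (hT : 0 < T) (u : ℝ → ℝ)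
    (hu : ContinuousOn u (Set.Icc 0 T)) (hu0 : 0 < u 0)
    (C : ℝ) (φ : ℝ → ℝ)
    (hφ : Tendsto φ (nhdsWithin 0 (Set.Ioi 0)) atTop)
    (hbound : ∀ t ∈ Set.Icc (0 : ℝ) T, 0 < u t → φ (u t) ≤ C) :
    ∀ t ∈ Set.Icc (0 : ℝ) T, 0 < u t := by
  -- get δ > 0 with φ s > C for s ∈ (0, δ)
  have hev : ∀ᶠ s in nhdsWithin 0 (Set.Ioi 0), C < φ s := hφ.eventually_gt_atTop C
  obtain ⟨δ, hδ0, hδ⟩ := (mem_nhdsGT_iff_exists_Ioo_subset).1 hev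
  have hδ0' : (0:ℝ) < δ := Set.mem_Ioi.mp hδ0
  -- u never lands in (0, δ) on [0,T]
  have key : ∀ t ∈ Set.Icc (0:ℝ) T, u t ∉ Set.Ioo (0:ℝ) δ := by
    intro t ht hmem
    have h1 : C < φ (u t) := hδ hmem
    have h2 : φ (u t) ≤ C := hbound t ht hmem.1
    linarith
  have hle : ∀ t ∈ Set.Icc (0:ℝ) T, δ ≤ u t ∨ u t ≤ 0 := by
    intro t ht
    rcases le_or_gt δ (u t) with h | h
    · exact Or.inl h
    rcases le_or_gt (u t) 0 with h' | h'
    · exact Or.inr h'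
    · exact absurd ⟨h', h⟩ (key t ht)
  have h0 : δ ≤ u 0 := by
    rcases hle 0 ⟨le_refl 0, hT.le⟩ with h | h
    · exact h
    · linarith
  intro t ht
  by_contra hpos
  push_neg at hpos
  -- IVT on [0, t]: u 0 ≥ δ, u t ≤ 0, so u hits δ/2 ∈ (0,δ)
  have hsub : Set.Icc (0:ℝ) t ⊆ Set.Icc 0 T := Set.Icc_subset_Icc le_rfl ht.2
  have hivt := intermediate_value_Icc' ht.1 (hu.mono hsub)
  have : (δ/2) ∈ Set.Icc (u t) (u 0) := ⟨by linarith, by linarith⟩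
  obtain ⟨s, hs, hus⟩ := hivt this
  exact key s (hsub hs) (by rw [hus]; constructor <;> linarith)
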